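/- arXiv:1012.2825 — 4 statements merged into one kernel-verified Lean document; each statement's English description precedes it below -/
import Mathlib

section
/- Let M be a p×q real matrix satisfying the Monge property. For each row i, let j*(i) denote the smallest column index j at which the minimum min_{1 ≤ j ≤ q} M_{ij} of row i is attained. Then j* is monotone nondecreasing: for all 1 ≤ i ≤ k ≤ p, j*(i) ≤ j*(k). -/
def MongeProperty {p q : ℕ} (M : Matrix (Fin p) (Fin q) ℝ) : Prop :=
  ∀ i k : Fin p, ∀ j l : Fin q, i ≤ k → j ≤ l → M i j + M k l ≤ M i l + M k j

theorem monotone_of_isLeast_rowMinimizers {ι κ α : Type*} [Preorder ι] [LinearOrder κ]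
    [AddCommMonoid α] [PartialOrder α] [IsOrderedCancelAddMonoid α] {M : ι → κ → α}
    (hM : ∀ i k j l, i ≤ k → j ≤ l → M i j + M k l ≤ M i l + M k j) {jstar : ι → κ}
    (hjstar : ∀ i, IsLeast {j | ∀ j', M i j ≤ M i j'} (jstar i)) :
    Monotone jstar := by
  intro i k hik
  by_contra! hlt
  -- Crossing the two minimizers: the Monge inequality moves the optimality of `jstar k`
  -- in row `k` over to row `i`, so `jstar k` also minimizes row `i`, left of `jstar i`.
  have hcross : M i (jstar k) ≤ M i (jstar i) :=
    le_of_add_le_add_right <| calc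
      M i (jstar k) + M k (jstar i) ≤ M i (jstar i) + M k (jstar k) := hM i k _ _ hik hlt.le
      _ ≤ M i (jstar i) + M k (jstar i) := add_le_add_right ((hjstar k).1 _) _
  have hmin : jstar k ∈ {j | ∀ j', M i j ≤ M i j'} := fun j' => hcross.trans ((hjstar i).1 j')
  exact hlt.not_ge ((hjstar i).2 hmin)

/-- In a Monge matrix, the leftmost column index attaining the row minimum is a
monotone nondecreasing function of the row. Here `jstar i` is assumed to be the
least element of the set of columns where row `i` attains its minimum. -/
theorem monge_row_minima_monotone {p q : ℕ}
    (M : Matrix (Fin p) (Fin q) ℝ) (hM : MongeProperty M)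
    (jstar : Fin p → Fin q)
    (hjstar : ∀ i : Fin p,
      IsLeast {j : Fin q | ∀ j' : Fin q, M i j ≤ M i j'} (jstar i)) :
    ∀ i k : Fin p, i ≤ k → jstar i ≤ jstar k :=
  fun _ _ hik => monotone_of_isLeast_rowMinimizers hM hjstar hik
end

section
/- Let f : {1,…,p} → {1,…,q+1} be monotone nondecreasing, and let M be a partial p×q real matrix whose entry M_{ij} is defined (non-blank) exactly when j ≥ f(i) (a falling staircase partial matrix). Assume that whenever 1 ≤ i ≤ k ≤ p, 1 ≤ j ≤ ℓ ≤ q and all four positions (i,j), (i,ℓ), (k,j), (k,ℓ) are non-blank, one has M_{ij} + M_{kℓ} ≤ M_{iℓ} + M_{kj}. Then there exists a (fully defined) p×q real matrix M̃ satisfying the Monge property such that M̃_{ij} = M_{ij} at every non-blank position and M̃_{ij} > M_{i'j'} for every blank position (i,j) and every non-blank position (i',j'). In particular, if at least one position is non-blank, the minimum entry of M̃ equals the minimum of the non-blank entries of M. -/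
section Completion

variable {ι κ : Type*} (D : ι → κ → Prop) [∀ i j, Decidable (D i j)] (M g : ι → κ → ℝ)

theorem monge_ite_of_separable [PartialOrder ι] [PartialOrder κ] (B : ℝ)
    (hD_right : ∀ i j l, j ≤ l → D i j → D i l)
    (hD_up : ∀ i k j, i ≤ k → D k j → D i j)
    (hM : ∀ i k j l, i ≤ k → j ≤ l → D i j → D i l → D k j → D k l →
      M i j + M k l ≤ M i l + M k j)
    (hMB : ∀ i j, D i j → |M i j| ≤ B)
    (hg_sep : ∀ i k j l, g i j + g k l = g i l + g k j)
    (hg_blank : ∀ i j, ¬ D i j → 3 * B ≤ g i j)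
    (hg_def : ∀ i j, D i j → g i j ≤ -B)
    (hg_row : ∀ i j l, j < l → g i l + 2 * B ≤ g i j)
    (hg_col : ∀ i k j, i < k → g i j + 2 * B ≤ g k j) :
    let N := fun i j => if D i j then M i j else g i j
    ∀ i k j l, i ≤ k → j ≤ l → N i j + N k l ≤ N i l + N k j := by
  intro N i k j l hik hjl
  rcases hik.eq_or_lt with rfl | hik
  · exact le_of_eq (add_comm _ _)
  rcases hjl.eq_or_lt with rfl | hjl
  · exact le_rfl
  have hB : ∀ i j, D i j → -B ≤ M i j ∧ M i j ≤ B := fun i j h => abs_le.mp (hMB i j h)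
  -- `(k, j)` is the corner most often blank: when it is non-blank, so are the other three.
  by_cases hkj : D k j
  · have hij := hD_up i k j hik.le hkj
    have hil := hD_right i j l hjl.le hij
    have hkl := hD_right k j l hjl.le hkj
    simp only [N, if_pos hij, if_pos hil, if_pos hkj, if_pos hkl]
    exact hM i k j l hik.le hjl.le hij hil hkj hkl
  simp only [N, if_neg hkj]
  by_cases hij : D i j <;> by_cases hkl : D k l
  · have hil := hD_right i j l hjl.le hij
    simp only [if_pos hij, if_pos hkl, if_pos hil]
    linarith [hB i j hij, hB k l hkl, hB i l hil, hg_blank k j hkj]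
  · have hil := hD_right i j l hjl.le hij
    simp only [if_pos hij, if_neg hkl, if_pos hil]
    linarith [hB i j hij, hB i l hil, hg_row k j l hjl]
  · have hil := hD_up i k l hik.le hkl
    simp only [if_neg hij, if_pos hkl, if_pos hil]
    linarith [hB k l hkl, hB i l hil, hg_col i k j hik]
  · simp only [if_neg hij, if_neg hkl]
    split_ifs with hil
    · linarith [hB i l hil, hg_def i l hil, hg_sep i k j l]
    · exact (hg_sep i k j l).le

theorem sInf_ite_eq_sInf [Finite ι] [Finite κ] (hD : ∃ i j, D i j)
    (hlt : ∀ i i' j j', ¬ D i j → D i' j' → M i' j' < g i j) :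
    sInf {x | ∃ i j, (if D i j then M i j else g i j) = x} =
      sInf {x | ∃ i j, D i j ∧ M i j = x} := by
  obtain ⟨i, j, hij⟩ := hD
  have : Nonempty {x : ι × κ // D x.1 x.2} := ⟨⟨(i, j), hij⟩⟩
  obtain ⟨⟨⟨i₀, j₀⟩, h₀⟩, hmin⟩ :=
    Finite.exists_min fun x : {x : ι × κ // D x.1 x.2} => M x.1.1 x.1.2
  have hM : IsLeast {x | ∃ i j, D i j ∧ M i j = x} (M i₀ j₀) := by
    refine ⟨⟨i₀, j₀, h₀, rfl⟩, ?_⟩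
    rintro _ ⟨i, j, hij, rfl⟩
    exact hmin ⟨(i, j), hij⟩
  have hN : IsLeast {x | ∃ i j, (if D i j then M i j else g i j) = x} (M i₀ j₀) := by
    refine ⟨⟨i₀, j₀, if_pos h₀⟩, ?_⟩
    rintro _ ⟨i, j, rfl⟩
    split_ifs with hij
    · exact hM.2 ⟨i, j, hij, rfl⟩
    · exact (hlt i i₀ j j₀ hij h₀).le
  rw [hN.csInf_eq, hM.csInf_eq]

end Completion

section StaircaseFill

variable {p q : ℕ} (f : Fin p → ℕ) (B : ℝ)

/-- The factor `p` lets the staircase term `f i - j - 2` dominate the row index `i`, which only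
separates rows with the same step. -/
def staircaseFill (i : Fin p) (j : Fin q) : ℝ :=
  4 * B * ((p : ℝ) * ((f i : ℝ) - j - 2) + i + 1) - B

theorem staircaseFill_add_add (i k : Fin p) (j l : Fin q) :
    staircaseFill f B i j + staircaseFill f B k l =
      staircaseFill f B i l + staircaseFill f B k j := by
  unfold staircaseFill; ring

variable {B}

theorem three_mul_le_staircaseFill (hB : 0 ≤ B) {i : Fin p} {j : Fin q}
    (h : ¬ f i ≤ (j : ℕ) + 1) : 3 * B ≤ staircaseFill f B i j := by
  have hstep : (j : ℝ) + 2 ≤ f i := by exact_mod_cast (by omega : (j : ℕ) + 2 ≤ f i)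
  have : 1 ≤ (p : ℝ) * ((f i : ℝ) - j - 2) + i + 1 := by
    have := mul_nonneg (Nat.cast_nonneg (α := ℝ) p) (sub_nonneg.mpr hstep)
    linarith [(Nat.cast_nonneg (i : ℕ) : (0 : ℝ) ≤ i)]
  unfold staircaseFill; nlinarith

theorem staircaseFill_le_neg (hB : 0 ≤ B) {i : Fin p} {j : Fin q}
    (h : f i ≤ (j : ℕ) + 1) : staircaseFill f B i j ≤ -B := by
  have hstep : (f i : ℝ) ≤ j + 1 := by exact_mod_cast h
  have hi : (i : ℝ) + 1 ≤ p := by exact_mod_cast i.isLt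
  have : (p : ℝ) * ((f i : ℝ) - j - 2) + i + 1 ≤ 0 := by
    nlinarith [Nat.cast_nonneg (α := ℝ) p]
  unfold staircaseFill; nlinarith

theorem staircaseFill_add_le_of_lt_right (hB : 0 ≤ B) (i : Fin p) {j l : Fin q} (hjl : j < l) :
    staircaseFill f B i l + 2 * B ≤ staircaseFill f B i j := by
  have hjl : (j : ℝ) + 1 ≤ l := by exact_mod_cast hjl
  have hp : (1 : ℝ) ≤ p := by exact_mod_cast i.pos
  have hstep : 1 ≤ (p : ℝ) * (l - j) := one_le_mul_of_one_le_of_one_le hp (by linarith)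
  unfold staircaseFill; nlinarith [mul_le_mul_of_nonneg_left hstep hB]

theorem staircaseFill_add_le_of_lt_left (hB : 0 ≤ B) (hf : Monotone f) {i k : Fin p} (hik : i < k)
    (j : Fin q) : staircaseFill f B i j + 2 * B ≤ staircaseFill f B k j := by
  have hik' : (i : ℝ) + 1 ≤ k := by exact_mod_cast hik
  have hfik : (f i : ℝ) ≤ f k := by exact_mod_cast hf hik.le
  have : (p : ℝ) * f i ≤ p * f k := mul_le_mul_of_nonneg_left hfik (Nat.cast_nonneg p)
  unfold staircaseFill; nlinarith

end StaircaseFill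

theorem falling_staircase_monge_completion_general {p q : ℕ}
    (f : Fin p → ℕ) (hfmono : Monotone f)
    (M : Fin p → Fin q → ℝ)
    (hM : ∀ i k : Fin p, ∀ j l : Fin q, i ≤ k → j ≤ l →
      f i ≤ (j : ℕ) + 1 → f i ≤ (l : ℕ) + 1 → f k ≤ (j : ℕ) + 1 → f k ≤ (l : ℕ) + 1 →
      M i j + M k l ≤ M i l + M k j) :
    ∃ N : Matrix (Fin p) (Fin q) ℝ, MongeProperty N ∧
      (∀ (i : Fin p) (j : Fin q), f i ≤ (j : ℕ) + 1 → N i j = M i j) ∧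
      (∀ (i i' : Fin p) (j j' : Fin q),
        ¬ (f i ≤ (j : ℕ) + 1) → f i' ≤ (j' : ℕ) + 1 → M i' j' < N i j) ∧
      ((∃ (i : Fin p) (j : Fin q), f i ≤ (j : ℕ) + 1) →
        sInf {x : ℝ | ∃ i j, N i j = x} =
          sInf {x : ℝ | ∃ (i : Fin p) (j : Fin q), f i ≤ (j : ℕ) + 1 ∧ M i j = x}) := by
  obtain ⟨B₀, hB₀⟩ := Finite.exists_le fun x : Fin p × Fin q => |M x.1 x.2|
  set B := max B₀ 1
  have hB : 0 < B := lt_max_of_lt_right one_pos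
  have hMB : ∀ i j, |M i j| ≤ B := fun i j => le_max_of_le_left (hB₀ (i, j))
  have hlt : ∀ (i i' : Fin p) (j j' : Fin q), ¬ f i ≤ (j : ℕ) + 1 → f i' ≤ (j' : ℕ) + 1 →
      M i' j' < staircaseFill f B i j := fun i i' j j' hij _ => by
    linarith [le_of_abs_le (hMB i' j'), three_mul_le_staircaseFill f hB.le hij]
  refine ⟨fun i j => if f i ≤ (j : ℕ) + 1 then M i j else staircaseFill f B i j, ?_,
    fun i j h => if_pos h, fun i i' j j' hij hi'j' => ?_,
    fun hD => sInf_ite_eq_sInf _ M _ hD hlt⟩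
  · exact monge_ite_of_separable _ M _ B (fun i j l hjl h => h.trans (by simpa using hjl))
      (fun i k j hik h => (hfmono hik).trans h) hM (fun i j _ => hMB i j)
      (staircaseFill_add_add f B) (fun i j => three_mul_le_staircaseFill f hB.le)
      (fun i j => staircaseFill_le_neg f hB.le)
      (fun i j l => staircaseFill_add_le_of_lt_right f hB.le i)
      (fun i k j hik => staircaseFill_add_le_of_lt_left f hB.le hfmono hik j)
  · simpa only [if_neg hij] using hlt i i' j j' hij hi'j'

/-- A falling staircase partial Monge matrix can be completed to a full Monge matrix
by filling the blank entries with values larger than every non-blank entry.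
Columns are 1-indexed via `(j : ℕ) + 1` for `j : Fin q`; the entry in row `i`,
column `j` is non-blank exactly when `f i ≤ (j : ℕ) + 1`, where
`f : Fin p → {1, …, q+1}` is monotone nondecreasing. In particular, if some
position is non-blank, the minimum entry of the completed matrix equals the
minimum of the non-blank entries. -/
theorem falling_staircase_monge_completion {p q : ℕ} (hp : 0 < p) (hq : 0 < q)
    (f : Fin p → ℕ) (hf : ∀ i, 1 ≤ f i ∧ f i ≤ q + 1) (hfmono : Monotone f)
    (M : Fin p → Fin q → ℝ)
    (hM : ∀ i k : Fin p, ∀ j l : Fin q, i ≤ k → j ≤ l →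
      f i ≤ (j : ℕ) + 1 → f i ≤ (l : ℕ) + 1 → f k ≤ (j : ℕ) + 1 → f k ≤ (l : ℕ) + 1 →
      M i j + M k l ≤ M i l + M k j) :
    ∃ N : Matrix (Fin p) (Fin q) ℝ, MongeProperty N ∧
      (∀ (i : Fin p) (j : Fin q), f i ≤ (j : ℕ) + 1 → N i j = M i j) ∧
      (∀ (i i' : Fin p) (j j' : Fin q),
        ¬ (f i ≤ (j : ℕ) + 1) → f i' ≤ (j' : ℕ) + 1 → M i' j' < N i j) ∧
      ((∃ (i : Fin p) (j : Fin q), f i ≤ (j : ℕ) + 1) →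
        sInf {x : ℝ | ∃ i j, N i j = x} =
          sInf {x : ℝ | ∃ (i : Fin p) (j : Fin q), f i ≤ (j : ℕ) + 1 ∧ M i j = x}) :=
  falling_staircase_monge_completion_general f hfmono M hM
end

section
/- Let g : {1,…,p} → {0,…,q} be monotone nondecreasing, and let M be a partial p×q real matrix whose entry M_{ij} is defined (non-blank) exactly when j ≤ g(i) (an inverse falling staircase partial matrix). Assume that whenever 1 ≤ i ≤ k ≤ p, 1 ≤ j ≤ ℓ ≤ q and all four positions (i,j), (i,ℓ), (k,j), (k,ℓ) are non-blank, one has M_{ij} + M_{kℓ} ≤ M_{iℓ} + M_{kj}. Then there exists a (fully defined) p×q real matrix M̃ satisfying the Monge property such that M̃_{ij} = M_{ij} at every non-blank position and M̃_{ij} > M_{i'j'} for every blank position (i,j) and every non-blank position (i',j'). In particular, if at least one position is non-blank, the minimum entry of M̃ equals the minimum of the non-blank entries of M. -/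
/-!
Fill the blank position `(i, j)` with `c * (q + 2) ^ (p - i) * (j + 1)`, where `c` exceeds three
times the absolute value of every entry. The filling alone is a Monge matrix, being the product of
a decreasing row weight and an increasing column weight. In a `2 × 2` submatrix, a blank position
forces the positions above it and to its right to be blank, so besides the fully defined and the
fully blank case only four mixed patterns occur. Each is settled because the filling grows by at
least `c` to the right and upwards, and, moving right in a row, by more than `c` plus any filled
value of a lower row: a row weight is at least `q + 2` times the weight of every row below it.
-/

variable {p q : ℕ}

theorem mongeProperty_mul_of_antitone_of_monotone {a : Fin p → ℝ} {b : Fin q → ℝ}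
    (ha : Antitone a) (hb : Monotone b) : MongeProperty (fun i j => a i * b j) := by
  intro i k j l hik hjl
  nlinarith [mul_nonneg (sub_nonneg.2 (ha hik)) (sub_nonneg.2 (hb hjl))]

section Fill

variable {c : ℝ}

def fillWeight (p q : ℕ) (c : ℝ) (i : Fin p) : ℝ := c * ((q : ℝ) + 2) ^ (p - (i : ℕ))

theorem le_fillWeight (hc : 0 ≤ c) (i : Fin p) : c ≤ fillWeight p q c i :=
  le_mul_of_one_le_right hc (one_le_pow₀ (le_add_of_nonneg_of_le q.cast_nonneg one_le_two))

theorem antitone_fillWeight (hc : 0 ≤ c) : Antitone (fillWeight p q c) := fun _ _ hik =>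
  mul_le_mul_of_nonneg_left
    (pow_le_pow_right₀ (le_add_of_nonneg_of_le q.cast_nonneg one_le_two)
      (Nat.sub_le_sub_left (Fin.le_def.1 hik) p)) hc

theorem mul_fillWeight_le_of_lt (hc : 0 ≤ c) {i k : Fin p} (hik : i < k) :
    ((q : ℝ) + 2) * fillWeight p q c k ≤ fillWeight p q c i := by
  have hexp : p - (k : ℕ) + 1 ≤ p - (i : ℕ) := by omega
  calc ((q : ℝ) + 2) * fillWeight p q c k = c * ((q : ℝ) + 2) ^ (p - (k : ℕ) + 1) := by
        rw [fillWeight]; ring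
    _ ≤ fillWeight p q c i :=
        mul_le_mul_of_nonneg_left
          (pow_le_pow_right₀ (le_add_of_nonneg_of_le q.cast_nonneg one_le_two) hexp) hc

def fill (p q : ℕ) (c : ℝ) (i : Fin p) (j : Fin q) : ℝ := fillWeight p q c i * ((j : ℕ) + 1)

theorem mongeProperty_fill (hc : 0 ≤ c) : MongeProperty (fill p q c) :=
  mongeProperty_mul_of_antitone_of_monotone (antitone_fillWeight hc)
    fun j l hjl => by simpa using Fin.le_def.1 hjl

theorem le_fill (hc : 0 ≤ c) (i : Fin p) (j : Fin q) : c ≤ fill p q c i j :=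
  (le_fillWeight hc i).trans
    (le_mul_of_one_le_right (hc.trans (le_fillWeight hc i)) (by simp))

theorem fill_add_le_of_col_lt (hc : 0 ≤ c) (i : Fin p) {j l : Fin q} (hjl : j < l) :
    fill p q c i j + c ≤ fill p q c i l := by
  have hjl' : ((j : ℕ) : ℝ) + 1 ≤ (l : ℕ) := by exact_mod_cast hjl
  have := le_fillWeight (q := q) hc i
  simp only [fill]
  nlinarith

theorem fill_add_le_of_row_lt (hc : 0 ≤ c) {i k : Fin p} (hik : i < k) (l : Fin q) :
    fill p q c k l + c ≤ fill p q c i l := by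
  have hk := le_fillWeight (q := q) hc k
  have hgap : fillWeight p q c k + c ≤ fillWeight p q c i := by
    nlinarith [mul_fillWeight_le_of_lt (q := q) hc hik, (q.cast_nonneg : (0 : ℝ) ≤ q)]
  have hl : (1 : ℝ) ≤ (l : ℕ) + 1 := by simp
  have := mul_le_mul_of_nonneg_left hl (by linarith : 0 ≤ fillWeight p q c i - fillWeight p q c k)
  simp only [fill]
  linarith

theorem fill_add_fill_add_le (hc : 0 ≤ c) {i k : Fin p} {j l : Fin q} (hik : i < k)
    (hjl : j < l) : fill p q c i j + fill p q c k l + c ≤ fill p q c i l := by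
  have hjl' : ((j : ℕ) : ℝ) + 1 ≤ (l : ℕ) := by exact_mod_cast hjl
  have hlq : ((l : ℕ) : ℝ) + 1 ≤ q := by exact_mod_cast l.isLt
  have hk := le_fillWeight (q := q) hc k
  have hik' := mul_fillWeight_le_of_lt (q := q) hc hik
  have hcol := mul_le_mul_of_nonneg_left (by linarith : (1 : ℝ) ≤ (l : ℕ) - (j : ℕ))
    (hc.trans (le_fillWeight (q := q) hc i))
  have hrow := mul_le_mul_of_nonneg_left hlq (hc.trans hk)
  simp only [fill]
  linarith

end Fill

section Completion

variable (g : Fin p → ℕ) (M : Fin p → Fin q → ℝ) (c : ℝ)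

def staircaseCompletion : Matrix (Fin p) (Fin q) ℝ :=
  fun i j => if (j : ℕ) + 1 ≤ g i then M i j else fill p q c i j

variable {g M c}

theorem staircaseCompletion_of_le {i : Fin p} {j : Fin q} (h : (j : ℕ) + 1 ≤ g i) :
    staircaseCompletion g M c i j = M i j :=
  if_pos h

theorem staircaseCompletion_of_not_le {i : Fin p} {j : Fin q} (h : ¬(j : ℕ) + 1 ≤ g i) :
    staircaseCompletion g M c i j = fill p q c i j :=
  if_neg h

theorem lt_staircaseCompletion (hMc : ∀ i j, 3 * |M i j| < c) {i i' : Fin p} {j j' : Fin q}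
    (h : ¬(j : ℕ) + 1 ≤ g i) : M i' j' < staircaseCompletion g M c i j := by
  rw [staircaseCompletion_of_not_le h]
  have := le_fill (c := c) (by linarith [hMc i' j', abs_nonneg (M i' j')]) i j
  linarith [le_abs_self (M i' j'), abs_nonneg (M i' j'), hMc i' j']

theorem mongeProperty_staircaseCompletion (hgmono : Monotone g)
    (hM : ∀ i k : Fin p, ∀ j l : Fin q, i ≤ k → j ≤ l →
      (j : ℕ) + 1 ≤ g i → (l : ℕ) + 1 ≤ g i → (j : ℕ) + 1 ≤ g k → (l : ℕ) + 1 ≤ g k →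
      M i j + M k l ≤ M i l + M k j)
    (hMc : ∀ i j, 3 * |M i j| < c) : MongeProperty (staircaseCompletion g M c) := by
  intro i k j l hik hjl
  have hc : 0 ≤ c := by linarith [hMc i j, abs_nonneg (M i j)]
  have bounds (i' : Fin p) (j' : Fin q) : -c < 3 * M i' j' ∧ 3 * M i' j' < c :=
    abs_lt.1 (by simpa [abs_mul] using hMc i' j')
  obtain ⟨-, hMij⟩ := bounds i j
  obtain ⟨-, hMkl⟩ := bounds k l
  obtain ⟨hMkj, -⟩ := bounds k j
  have hgik := hgmono hik
  by_cases hil : (l : ℕ) + 1 ≤ g i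
  · have hij : (j : ℕ) + 1 ≤ g i := by omega
    have hkl : (l : ℕ) + 1 ≤ g k := by omega
    have hkj : (j : ℕ) + 1 ≤ g k := by omega
    rw [staircaseCompletion_of_le hij, staircaseCompletion_of_le hkl,
      staircaseCompletion_of_le hil, staircaseCompletion_of_le hkj]
    exact hM i k j l hik hjl hij hil hkj hkl
  rw [staircaseCompletion_of_not_le hil]
  by_cases hij : (j : ℕ) + 1 ≤ g i
  · have hkj : (j : ℕ) + 1 ≤ g k := by omega
    rw [staircaseCompletion_of_le hij, staircaseCompletion_of_le hkj]
    by_cases hkl : (l : ℕ) + 1 ≤ g k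
    · rw [staircaseCompletion_of_le hkl]
      linarith [le_fill (q := q) hc i l]
    · rw [staircaseCompletion_of_not_le hkl]
      rcases hik.eq_or_lt with rfl | hik
      · linarith
      · linarith [fill_add_le_of_row_lt (q := q) hc hik l]
  rw [staircaseCompletion_of_not_le hij]
  by_cases hkj : (j : ℕ) + 1 ≤ g k
  · rw [staircaseCompletion_of_le hkj]
    by_cases hkl : (l : ℕ) + 1 ≤ g k
    · rw [staircaseCompletion_of_le hkl]
      rcases hjl.eq_or_lt with rfl | hjl
      · linarith
      · linarith [fill_add_le_of_col_lt (p := p) hc i hjl]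
    · rw [staircaseCompletion_of_not_le hkl]
      have hik : i < k := lt_of_le_of_ne hik (by rintro rfl; exact hij hkj)
      have hjl : j < l := lt_of_le_of_ne hjl (by rintro rfl; exact hkl hkj)
      linarith [fill_add_fill_add_le hc hik hjl]
  · have hkl : ¬(l : ℕ) + 1 ≤ g k := by omega
    rw [staircaseCompletion_of_not_le hkj, staircaseCompletion_of_not_le hkl]
    exact mongeProperty_fill hc i k j l hik hjl

end Completion

theorem inverse_falling_staircase_monge_completion_general {p q : ℕ}
    (g : Fin p → ℕ) (hgmono : Monotone g)
    (M : Fin p → Fin q → ℝ)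
    (hM : ∀ i k : Fin p, ∀ j l : Fin q, i ≤ k → j ≤ l →
      (j : ℕ) + 1 ≤ g i → (l : ℕ) + 1 ≤ g i → (j : ℕ) + 1 ≤ g k → (l : ℕ) + 1 ≤ g k →
      M i j + M k l ≤ M i l + M k j) :
    ∃ N : Matrix (Fin p) (Fin q) ℝ, MongeProperty N ∧
      (∀ (i : Fin p) (j : Fin q), (j : ℕ) + 1 ≤ g i → N i j = M i j) ∧
      (∀ (i i' : Fin p) (j j' : Fin q),
        ¬ ((j : ℕ) + 1 ≤ g i) → (j' : ℕ) + 1 ≤ g i' → M i' j' < N i j) ∧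
      ((∃ (i : Fin p) (j : Fin q), (j : ℕ) + 1 ≤ g i) →
        sInf {x : ℝ | ∃ i j, N i j = x} =
          sInf {x : ℝ | ∃ (i : Fin p) (j : Fin q), (j : ℕ) + 1 ≤ g i ∧ M i j = x}) := by
  obtain ⟨b, hb⟩ := (Set.finite_range fun ij : Fin p × Fin q => 3 * |M ij.1 ij.2|).bddAbove
  have hMc : ∀ i j, 3 * |M i j| < b + 1 := fun i j =>
    (hb ⟨(i, j), rfl⟩).trans_lt (lt_add_one b)
  refine ⟨staircaseCompletion g M (b + 1), mongeProperty_staircaseCompletion hgmono hM hMc,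
    fun i j h => staircaseCompletion_of_le h,
    fun i i' j j' h _ => lt_staircaseCompletion hMc h, ?_⟩
  rintro ⟨i₀, j₀, h₀⟩
  refine csInf_eq_csInf_of_forall_exists_le ?_ ?_
  · rintro _ ⟨i, j, rfl⟩
    by_cases h : (j : ℕ) + 1 ≤ g i
    · exact ⟨M i j, ⟨i, j, h, rfl⟩, (staircaseCompletion_of_le h).ge⟩
    · exact ⟨M i₀ j₀, ⟨i₀, j₀, h₀, rfl⟩, (lt_staircaseCompletion hMc h).le⟩
  · rintro _ ⟨i, j, h, rfl⟩
    exact ⟨M i j, ⟨i, j, staircaseCompletion_of_le h⟩, le_rfl⟩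

/-- An inverse falling staircase partial Monge matrix can be completed to a full
Monge matrix by filling the blank entries with values larger than every non-blank
entry. Columns are 1-indexed via `(j : ℕ) + 1` for `j : Fin q`; the entry in row
`i`, column `j` is non-blank exactly when `(j : ℕ) + 1 ≤ g i`, where
`g : Fin p → {0, …, q}` is monotone nondecreasing. In particular, if some position
is non-blank, the minimum entry of the completed matrix equals the minimum of the
non-blank entries. -/
theorem inverse_falling_staircase_monge_completion {p q : ℕ} (hp : 0 < p) (hq : 0 < q)
    (g : Fin p → ℕ) (hg : ∀ i, g i ≤ q) (hgmono : Monotone g)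
    (M : Fin p → Fin q → ℝ)
    (hM : ∀ i k : Fin p, ∀ j l : Fin q, i ≤ k → j ≤ l →
      (j : ℕ) + 1 ≤ g i → (l : ℕ) + 1 ≤ g i → (j : ℕ) + 1 ≤ g k → (l : ℕ) + 1 ≤ g k →
      M i j + M k l ≤ M i l + M k j) :
    ∃ N : Matrix (Fin p) (Fin q) ℝ, MongeProperty N ∧
      (∀ (i : Fin p) (j : Fin q), (j : ℕ) + 1 ≤ g i → N i j = M i j) ∧
      (∀ (i i' : Fin p) (j j' : Fin q),
        ¬ ((j : ℕ) + 1 ≤ g i) → (j' : ℕ) + 1 ≤ g i' → M i' j' < N i j) ∧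
      ((∃ (i : Fin p) (j : Fin q), (j : ℕ) + 1 ≤ g i) →
        sInf {x : ℝ | ∃ i j, N i j = x} =
          sInf {x : ℝ | ∃ (i : Fin p) (j : Fin q), (j : ℕ) + 1 ≤ g i ∧ M i j = x}) :=
  inverse_falling_staircase_monge_completion_general g hgmono M hM
end

section
/- Let (V, ℓ) be a weighted directed graph with edge set E = {(a,b) : ℓ(a,b) < ∞}, let B ⊆ E be a piece with endpoint set V(B) and boundary ∂B = {b ∈ V(B) : b is an endpoint of some edge in E ∖ B}, and let I = V(B) ∖ ∂B be the set of internal vertices of B. Define a new length function ℓ' on V ∖ I by ℓ'(u,v) = min( ℓ₀(u,v), δ(u,v) ), where ℓ₀(u,v) = ℓ(u,v) if (u,v) ∈ E ∖ B and ∞ otherwise, and δ(u,v) = d_B(u,v) if u, v ∈ ∂B and ∞ otherwise. Then for all u, v ∈ V ∖ I, the distance from u to v in the weighted directed graph (V ∖ I, ℓ') equals d(u,v), the distance from u to v in (V, ℓ). (This is the correctness of replacing a piece by the complete graph on its boundary weighted by the shortest-path distances inside the piece, as in the dense distance graph.) -/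
open scoped ENNReal

/-- The length of a walk `w₀, w₁, …, w_k`, given as a list of vertices, with respect
to the length function `ℓ : V → V → ℝ≥0∞`: the sum `Σ ℓ (w_{i-1}) (w_i)`. -/
noncomputable def walkLen {V : Type*} (ℓ : V → V → ℝ≥0∞) : List V → ℝ≥0∞
  | [] => 0
  | [_] => 0
  | a :: b :: rest => ℓ a b + walkLen ℓ (b :: rest)

/-- `IsWalkIn F u v w` means the (nonempty) list of vertices `w` is a walk from `u`
to `v` all of whose consecutive pairs lie in `F`. -/
def IsWalkIn {V : Type*} (F : Set (V × V)) (u v : V) (w : List V) : Prop :=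
  w.head? = some u ∧ w.getLast? = some v ∧ w.Chain' (fun a b => (a, b) ∈ F)

/-- `gdist ℓ F u v` is the infimum in `[0,∞]` of the lengths of all walks from `u`
to `v` whose consecutive pairs lie in `F`. Taking `F = Set.univ` gives the distance
`d(u,v)` in the weighted directed graph `(V, ℓ)`. -/
noncomputable def gdist {V : Type*} (ℓ : V → V → ℝ≥0∞) (F : Set (V × V)) (u v : V) : ℝ≥0∞ :=
  ⨅ w ∈ {w : List V | IsWalkIn F u v w}, walkLen ℓ w

open scoped Classical

/-!
Every edge of the contracted graph is at least as long as the distance between its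
endpoints in `(V, ℓ)`, which gives `d ≤ d'`. For the converse, extend `d'(·, v)` to an
interior vertex `x` by `⨅ s ∈ ∂B, d_B(x, s) + d'(s, v)`. No edge of `(V, ℓ)` decreases this
potential by more than its length: an edge outside `B` joins two non-interior vertices and
is an edge of the contracted graph, while an edge of `B` is absorbed into the `d_B` term
(its non-interior endpoints lie on the boundary). A potential with this property and
value `0` at `v` is a lower bound for `d(·, v)`.
-/

section Walks

variable {V : Type*} {ℓ : V → V → ℝ≥0∞} {F : Set (V × V)} {u v x : V}

theorem isWalkIn_iff {w : List V} :
    IsWalkIn F u v w ↔ w.head? = some u ∧ w.getLast? = some v ∧ w.IsChain (fun a b => (a, b) ∈ F) :=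
  Iff.rfl

theorem isWalkIn_singleton_iff {a : V} : IsWalkIn F u v [a] ↔ a = u ∧ a = v := by
  simp [isWalkIn_iff]

theorem isWalkIn_cons_cons_iff {a b : V} {t : List V} :
    IsWalkIn F u v (a :: b :: t) ↔ a = u ∧ (a, b) ∈ F ∧ IsWalkIn F b v (b :: t) := by
  simp [isWalkIn_iff, and_left_comm]

theorem gdist_le_walkLen {w : List V} (h : IsWalkIn F u v w) : gdist ℓ F u v ≤ walkLen ℓ w :=
  iInf₂_le w h

@[simp]
theorem gdist_self (ℓ : V → V → ℝ≥0∞) (F : Set (V × V)) (u : V) : gdist ℓ F u u = 0 :=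
  nonpos_iff_eq_zero.1 (gdist_le_walkLen (isWalkIn_singleton_iff.2 ⟨rfl, rfl⟩))

theorem gdist_le_add_of_mem (h : (u, x) ∈ F) : gdist ℓ F u v ≤ ℓ u x + gdist ℓ F x v := by
  simp only [gdist, ENNReal.add_iInf]
  refine le_iInf₂ fun w hw => ?_
  rcases w with _ | ⟨b, t⟩
  · simp [IsWalkIn] at hw
  obtain rfl : b = x := by simpa using hw.1
  exact gdist_le_walkLen (isWalkIn_cons_cons_iff.2 ⟨rfl, h, hw⟩)

theorem gdist_le_of_mem (h : (u, v) ∈ F) : gdist ℓ F u v ≤ ℓ u v := by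
  simpa using gdist_le_add_of_mem (ℓ := ℓ) (v := v) h

theorem le_gdist_add_of_forall_le_add {g : V → ℝ≥0∞}
    (hg : ∀ x y, (x, y) ∈ F → g x ≤ ℓ x y + g y) (u v : V) :
    g u ≤ gdist ℓ F u v + g v := by
  suffices ∀ w u, IsWalkIn F u v w → g u ≤ walkLen ℓ w + g v by
    simp only [gdist, ENNReal.iInf_add]
    exact le_iInf₂ fun w hw => this w u hw
  intro w
  induction w with
  | nil => simp [IsWalkIn]
  | cons a t ih =>
    intro u hw
    rcases t with _ | ⟨b, t⟩
    · obtain ⟨rfl, rfl⟩ := isWalkIn_singleton_iff.1 hw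
      simp [walkLen]
    · obtain ⟨rfl, hab, hw⟩ := isWalkIn_cons_cons_iff.1 hw
      calc g a ≤ ℓ a b + g b := hg a b hab
        _ ≤ ℓ a b + (walkLen ℓ (b :: t) + g v) := add_le_add_right (ih b hw) _
        _ = walkLen ℓ (a :: b :: t) + g v := by rw [walkLen, add_assoc]

theorem gdist_triangle (ℓ : V → V → ℝ≥0∞) (F : Set (V × V)) (u v x : V) :
    gdist ℓ F u x ≤ gdist ℓ F u v + gdist ℓ F v x :=
  le_gdist_add_of_forall_le_add (fun _ _ h => gdist_le_add_of_mem h) u v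

theorem gdist_anti {G : Set (V × V)} (h : F ⊆ G) (u v : V) : gdist ℓ G u v ≤ gdist ℓ F u v :=
  le_iInf₂ fun _ hw => gdist_le_walkLen ⟨hw.1, hw.2.1, hw.2.2.imp fun _ _ hab => h hab⟩

theorem gdist_comp_le_of_forall_le {W : Type*} {ℓ' : W → W → ℝ≥0∞} {F' : Set (W × W)}
    (f : W → V) (h : ∀ a b, (a, b) ∈ F' → gdist ℓ F (f a) (f b) ≤ ℓ' a b) (a b : W) :
    gdist ℓ F (f a) (f b) ≤ gdist ℓ' F' a b := by
  simpa using le_gdist_add_of_forall_le_add (g := fun c => gdist ℓ F (f c) (f b))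
    (fun c c' hcc' => (gdist_triangle ℓ F _ (f c') _).trans (add_le_add_left (h c c' hcc') _)) a b

theorem eq_or_exists_mem_of_gdist_ne_top (h : gdist ℓ F u v ≠ ⊤) : u = v ∨ ∃ y, (u, y) ∈ F := by
  contrapose! h
  refine iInf₂_eq_top.2 fun w hw => absurd hw ?_
  rcases w with _ | ⟨a, _ | ⟨b, t⟩⟩
  · simp [IsWalkIn]
  · exact fun hw => h.1 (by obtain ⟨rfl, rfl⟩ := isWalkIn_singleton_iff.1 hw; rfl)
  · exact fun hw => by obtain ⟨rfl, hab, -⟩ := isWalkIn_cons_cons_iff.1 hw; exact h.2 b hab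

end Walks

section Piece

variable {V : Type*} {ℓ : V → V → ℝ≥0∞} {E B : Set (V × V)} {VB bd I : Set V}

theorem notMem_interior_of_mem_diff (hbd : bd = {x ∈ VB | ∃ e ∈ E \ B, e.1 = x ∨ e.2 = x})
    (hI : I = VB \ bd) {e : V × V} (he : e ∈ E \ B) : e.1 ∉ I ∧ e.2 ∉ I := by
  subst hbd hI
  exact ⟨fun h => h.2 ⟨h.1, e, he, .inl rfl⟩, fun h => h.2 ⟨h.1, e, he, .inr rfl⟩⟩

theorem mem_boundary_of_mem_piece (hVB : VB = {x : V | ∃ e ∈ B, e.1 = x ∨ e.2 = x})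
    (hI : I = VB \ bd) {e : V × V} (he : e ∈ B) : (e.1 ∉ I → e.1 ∈ bd) ∧ (e.2 ∉ I → e.2 ∈ bd) := by
  subst hVB hI
  exact ⟨fun h => by_contra fun h' => h ⟨⟨e, he, .inl rfl⟩, h'⟩,
    fun h => by_contra fun h' => h ⟨⟨e, he, .inr rfl⟩, h'⟩⟩

variable (ℓ B bd) (ℓ' : {x // x ∉ I} → {x // x ∉ I} → ℝ≥0∞) (v : {x // x ∉ I})

noncomputable def contractPotential (x : V) : ℝ≥0∞ :=
  if hx : x ∈ I then ⨅ (s : {x // x ∉ I}) (_ : s.1 ∈ bd), gdist ℓ B x s + gdist ℓ' Set.univ s v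
  else gdist ℓ' Set.univ ⟨x, hx⟩ v

variable {ℓ B bd ℓ' v}

theorem contractPotential_of_mem {x : V} (hx : x ∈ I) :
    contractPotential ℓ B bd ℓ' v x =
      ⨅ (s : {x // x ∉ I}) (_ : s.1 ∈ bd), gdist ℓ B x s + gdist ℓ' Set.univ s v :=
  dif_pos hx

theorem contractPotential_of_notMem {x : V} (hx : x ∉ I) :
    contractPotential ℓ B bd ℓ' v x = gdist ℓ' Set.univ ⟨x, hx⟩ v :=
  dif_neg hx

theorem contractPotential_le_gdist_add (hVB : VB = {x : V | ∃ e ∈ B, e.1 = x ∨ e.2 = x})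
    (hI : I = VB \ bd)
    (hℓ'B : ∀ a b : {x // x ∉ I}, a.1 ∈ bd → b.1 ∈ bd → ℓ' a b ≤ gdist ℓ B a b)
    (x : V) {s : {x // x ∉ I}} (hs : s.1 ∈ bd) :
    contractPotential ℓ B bd ℓ' v x ≤ gdist ℓ B x s + gdist ℓ' Set.univ s v := by
  by_cases hx : x ∈ I
  · exact (contractPotential_of_mem hx).trans_le (iInf₂_le s hs)
  rw [contractPotential_of_notMem hx]
  by_cases htop : gdist ℓ B x s = ⊤
  · simp [htop]
  rcases eq_or_exists_mem_of_gdist_ne_top htop with rfl | ⟨y, hxy⟩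
  · simp
  have hxbd : x ∈ bd := (mem_boundary_of_mem_piece hVB hI hxy).1 hx
  calc gdist ℓ' Set.univ ⟨x, hx⟩ v ≤ ℓ' ⟨x, hx⟩ s + gdist ℓ' Set.univ s v :=
        gdist_le_add_of_mem (Set.mem_univ _)
    _ ≤ gdist ℓ B x s + gdist ℓ' Set.univ s v := add_le_add_left (hℓ'B _ _ hxbd hs) _

theorem contractPotential_le_add (hE : E = {e : V × V | ℓ e.1 e.2 < ⊤})
    (hVB : VB = {x : V | ∃ e ∈ B, e.1 = x ∨ e.2 = x})
    (hbd : bd = {x ∈ VB | ∃ e ∈ E \ B, e.1 = x ∨ e.2 = x}) (hI : I = VB \ bd)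
    (hℓ'E : ∀ a b : {x // x ∉ I}, (a.1, b.1) ∈ E \ B → ℓ' a b ≤ ℓ a b)
    (hℓ'B : ∀ a b : {x // x ∉ I}, a.1 ∈ bd → b.1 ∈ bd → ℓ' a b ≤ gdist ℓ B a b) (x y : V) :
    contractPotential ℓ B bd ℓ' v x ≤ ℓ x y + contractPotential ℓ B bd ℓ' v y := by
  by_cases hxy : ℓ x y = ⊤
  · simp [hxy]
  have hxyE : (x, y) ∈ E := hE ▸ lt_top_iff_ne_top.2 hxy
  by_cases hxyB : (x, y) ∈ B
  · by_cases hy : y ∈ I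
    · rw [contractPotential_of_mem hy]
      simp only [ENNReal.add_iInf]
      refine le_iInf₂ fun s hs => ?_
      calc contractPotential ℓ B bd ℓ' v x ≤ gdist ℓ B x s + gdist ℓ' Set.univ s v :=
            contractPotential_le_gdist_add hVB hI hℓ'B x hs
        _ ≤ ℓ x y + gdist ℓ B y s + gdist ℓ' Set.univ s v :=
            add_le_add_left (gdist_le_add_of_mem hxyB) _
        _ = ℓ x y + (gdist ℓ B y s + gdist ℓ' Set.univ s v) := add_assoc _ _ _
    · have hybd : y ∈ bd := (mem_boundary_of_mem_piece hVB hI hxyB).2 hy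
      calc contractPotential ℓ B bd ℓ' v x ≤ gdist ℓ B x y + gdist ℓ' Set.univ ⟨y, hy⟩ v :=
            contractPotential_le_gdist_add hVB hI hℓ'B x (s := ⟨y, hy⟩) hybd
        _ ≤ ℓ x y + contractPotential ℓ B bd ℓ' v y := by
            rw [contractPotential_of_notMem hy]
            exact add_le_add_left (gdist_le_of_mem hxyB) _
  · obtain ⟨hx, hy⟩ := notMem_interior_of_mem_diff hbd hI ⟨hxyE, hxyB⟩
    rw [contractPotential_of_notMem hx, contractPotential_of_notMem hy]
    calc gdist ℓ' Set.univ ⟨x, hx⟩ v ≤ ℓ' ⟨x, hx⟩ ⟨y, hy⟩ + gdist ℓ' Set.univ ⟨y, hy⟩ v :=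
          gdist_le_add_of_mem (Set.mem_univ _)
      _ ≤ ℓ x y + gdist ℓ' Set.univ ⟨y, hy⟩ v := add_le_add_left (hℓ'E _ _ ⟨hxyE, hxyB⟩) _

theorem gdist_contract_le (hE : E = {e : V × V | ℓ e.1 e.2 < ⊤})
    (hVB : VB = {x : V | ∃ e ∈ B, e.1 = x ∨ e.2 = x})
    (hbd : bd = {x ∈ VB | ∃ e ∈ E \ B, e.1 = x ∨ e.2 = x}) (hI : I = VB \ bd)
    (hℓ'E : ∀ a b : {x // x ∉ I}, (a.1, b.1) ∈ E \ B → ℓ' a b ≤ ℓ a b)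
    (hℓ'B : ∀ a b : {x // x ∉ I}, a.1 ∈ bd → b.1 ∈ bd → ℓ' a b ≤ gdist ℓ B a b)
    (a b : {x // x ∉ I}) : gdist ℓ' Set.univ a b ≤ gdist ℓ Set.univ a b := by
  have := le_gdist_add_of_forall_le_add (F := Set.univ)
    (fun x y _ => contractPotential_le_add (v := b) hE hVB hbd hI hℓ'E hℓ'B x y) a b
  rwa [contractPotential_of_notMem a.2, contractPotential_of_notMem b.2, gdist_self,
    add_zero] at this

end Piece

theorem dist_dense_distance_graph_general {V : Type*}
    (ℓ : V → V → ℝ≥0∞) (E B : Set (V × V)) (VB bd I : Set V)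
    (hE : E = {e : V × V | ℓ e.1 e.2 < ⊤})
    (hVB : VB = {x : V | ∃ e ∈ B, e.1 = x ∨ e.2 = x})
    (hbd : bd = {x ∈ VB | ∃ e ∈ E \ B, e.1 = x ∨ e.2 = x})
    (hI : I = VB \ bd)
    (ℓ' : {x : V // x ∉ I} → {x : V // x ∉ I} → ℝ≥0∞)
    (hℓ' : ∀ a b : {x : V // x ∉ I},
      ℓ' a b = min (if (a.1, b.1) ∈ E \ B then ℓ a.1 b.1 else ⊤)
        (if a.1 ∈ bd ∧ b.1 ∈ bd then gdist ℓ B a.1 b.1 else ⊤)) :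
    ∀ a b : {x : V // x ∉ I},
      gdist ℓ' Set.univ a b = gdist ℓ Set.univ a.1 b.1 := by
  have hℓ'E (a b : {x // x ∉ I}) (h : (a.1, b.1) ∈ E \ B) : ℓ' a b ≤ ℓ a b :=
    (hℓ' a b).trans_le ((min_le_left _ _).trans_eq (if_pos h))
  have hℓ'B (a b : {x // x ∉ I}) (ha : a.1 ∈ bd) (hb : b.1 ∈ bd) : ℓ' a b ≤ gdist ℓ B a b :=
    (hℓ' a b).trans_le ((min_le_right _ _).trans_eq (if_pos ⟨ha, hb⟩))
  have hdist_le_ℓ' (a b : {x // x ∉ I}) : gdist ℓ Set.univ a b ≤ ℓ' a b := by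
    rw [hℓ']
    refine le_min ?_ ?_ <;> split_ifs
    exacts [gdist_le_of_mem (Set.mem_univ _), le_top, gdist_anti (Set.subset_univ B) _ _, le_top]
  intro a b
  exact le_antisymm (gdist_contract_le hE hVB hbd hI hℓ'E hℓ'B a b)
    (gdist_comp_le_of_forall_le Subtype.val (fun a b _ => hdist_le_ℓ' a b) a b)

/-- Correctness of the dense distance graph contraction: removing the internal
vertices `I` of a piece `B` and replacing the piece by the complete graph on its
boundary `bd`, weighted by shortest-path distances inside `B` (while keeping all
edges outside `B`), preserves all distances between the remaining vertices. -/
theorem dist_dense_distance_graph {V : Type*} [Fintype V]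
    (ℓ : V → V → ℝ≥0∞) (E B : Set (V × V)) (VB bd I : Set V)
    (hE : E = {e : V × V | ℓ e.1 e.2 < ⊤})
    (hB : B ⊆ E)
    (hVB : VB = {x : V | ∃ e ∈ B, e.1 = x ∨ e.2 = x})
    (hbd : bd = {x ∈ VB | ∃ e ∈ E \ B, e.1 = x ∨ e.2 = x})
    (hI : I = VB \ bd)
    (ℓ' : {x : V // x ∉ I} → {x : V // x ∉ I} → ℝ≥0∞)
    (hℓ' : ∀ a b : {x : V // x ∉ I},
      ℓ' a b = min (if (a.1, b.1) ∈ E \ B then ℓ a.1 b.1 else ⊤)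
        (if a.1 ∈ bd ∧ b.1 ∈ bd then gdist ℓ B a.1 b.1 else ⊤)) :
    ∀ a b : {x : V // x ∉ I},
      gdist ℓ' Set.univ a b = gdist ℓ Set.univ a.1 b.1 :=
  dist_dense_distance_graph_general ℓ E B VB bd I hE hVB hbd hI ℓ' hℓ'
end
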